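/- arXiv:1306.6033 — 3 statements merged into one kernel-verified Lean document; each statement's English description precedes it below -/
import Mathlib

section
/- Let N ≥ 1 and let β_N = (ξ_1, …, ξ_{N²}) be an orthonormal basis of u_N. Then for every matrix A ∈ M_N(ℂ), the sum over the basis satisfies Σ_{i=1}^{N²} ξ_i A ξ_i = − tr(A) · I_N, where I_N is the identity matrix. -/
open Matrix

/-- **Magic formula** (DHK, Prop. 3.1, first part): if `ξ` is an orthonormal basis of the
real vector space `u_N` of skew-Hermitian `N × N` complex matrices with respect to the
real inner product `⟨ξ,η⟩ = -N Tr(ξη)`, then for every `A ∈ M_N(ℂ)` we have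
`Σ_i ξ_i A ξ_i = - tr(A) • I_N`, where `tr = (1/N) Tr` is the normalized trace. -/
theorem magic_formula_one (N : ℕ) (hN : 1 ≤ N)
    (ξ : Fin (N ^ 2) → Matrix (Fin N) (Fin N) ℂ)
    (hskew : ∀ i, (ξ i)ᴴ = -ξ i)
    (horth : ∀ i j, -(N : ℂ) * (ξ i * ξ j).trace = if i = j then 1 else 0)
    (hspan : ∀ A : Matrix (Fin N) (Fin N) ℂ, Aᴴ = -A →
      A ∈ Submodule.span ℝ (Set.range ξ))
    (A : Matrix (Fin N) (Fin N) ℂ) :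
    ∑ i, ξ i * A * ξ i = -(A.trace / N) • (1 : Matrix (Fin N) (Fin N) ℂ) := by
  have hN0 : (N : ℂ) ≠ 0 := Nat.cast_ne_zero.mpr (Nat.one_le_iff_ne_zero.mp hN)
  -- reconstruction: every skew-Hermitian X equals Σ_i (-N Tr(ξ_i X)) ξ_i, entrywise
  have recon : ∀ X : Matrix (Fin N) (Fin N) ℂ, Xᴴ = -X → ∀ c d : Fin N,
      X c d = ∑ i, (-(N : ℂ) * (ξ i * X).trace) * ξ i c d := by
    intro X hX c d
    obtain ⟨f, hf⟩ := (Submodule.mem_span_range_iff_exists_fun ℝ).mp (hspan X hX)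
    have hcoef : ∀ j, -(N : ℂ) * (ξ j * X).trace = (f j : ℂ) := by
      intro j
      rw [← hf, Finset.mul_sum]
      have h1 : ∀ i, ξ j * (f i • ξ i) = f i • (ξ j * ξ i) := fun i => Matrix.mul_smul _ _ _
      simp only [h1, trace_sum, trace_smul, Finset.mul_sum]
      have h2 : ∀ i ∈ Finset.univ, -(N : ℂ) * (f i • (ξ j * ξ i).trace)
          = (f i : ℂ) * (if j = i then 1 else 0) := by
        intro i _
        rw [Complex.real_smul, ← horth j i]; ring
      rw [Finset.sum_congr rfl h2]
      simp
    calc X c d = (∑ i, f i • ξ i) c d := by rw [hf]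
    _ = ∑ i, (f i : ℂ) * ξ i c d := by
        rw [Matrix.sum_apply]
        exact Finset.sum_congr rfl fun i _ => by simp [Complex.real_smul]
    _ = ∑ i, (-(N : ℂ) * (ξ i * X).trace) * ξ i c d :=
        Finset.sum_congr rfl fun i _ => by rw [hcoef]
  -- key identity
  have key : ∀ a b c d : Fin N,
      ∑ i, ξ i a b * ξ i c d = -(if c = b ∧ d = a then (1:ℂ) else 0) / N := by
    intro a b c d
    set E : Fin N → Fin N → Matrix (Fin N) (Fin N) ℂ :=
      fun u v => Matrix.of (fun p q => if p = u ∧ q = v then 1 else 0) with hE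
    have hEentry : ∀ u v p q, E u v p q = if p = u ∧ q = v then (1:ℂ) else 0 := by
      intro u v p q; rfl
    have htrE : ∀ (j : Fin (N^2)) u v, (ξ j * E u v).trace = ξ j v u := by
      intro j u v
      simp only [Matrix.trace, Matrix.diag, Matrix.mul_apply, hEentry, mul_ite, mul_one,
        mul_zero, ite_and]
      simp [Finset.sum_ite_eq']
    have hX1skew : (E b a - E a b)ᴴ = -(E b a - E a b) := by
      ext p q
      simp only [Matrix.conjTranspose_apply, Matrix.sub_apply, Matrix.neg_apply, hEentry,
        star_sub]
      by_cases h1 : q = b <;> by_cases h2 : p = a <;> by_cases h3 : q = a <;>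
        by_cases h4 : p = b <;> simp [h1, h2, h3, h4, and_comm]
    have hX2skew : ((Complex.I • (E b a + E a b)))ᴴ = -(Complex.I • (E b a + E a b)) := by
      ext p q
      simp only [Matrix.conjTranspose_apply, Matrix.smul_apply, Matrix.add_apply,
        Matrix.neg_apply, hEentry, smul_eq_mul, star_mul', star_add, Complex.conj_I]
      by_cases h1 : q = b <;> by_cases h2 : p = a <;> by_cases h3 : q = a <;>
        by_cases h4 : p = b <;> simp [h1, h2, h3, h4, and_comm] <;> ring
    have e1 := recon _ hX1skew c d
    have e2 := recon _ hX2skew c d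
    have htr1 : ∀ j, (ξ j * (E b a - E a b)).trace = ξ j a b - ξ j b a := by
      intro j; rw [Matrix.mul_sub, trace_sub, htrE, htrE]
    have htr2 : ∀ j, (ξ j * (Complex.I • (E b a + E a b))).trace
        = Complex.I * (ξ j a b + ξ j b a) := by
      intro j
      rw [Matrix.mul_smul, trace_smul, Matrix.mul_add, trace_add, htrE, htrE, smul_eq_mul]
    simp only [htr1] at e1
    simp only [htr2] at e2
    have lhs1 : (E b a - E a b) c d
        = (if c = b ∧ d = a then (1:ℂ) else 0) - (if c = a ∧ d = b then 1 else 0) := by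
      simp [Matrix.sub_apply, hEentry]
    have lhs2 : (Complex.I • (E b a + E a b)) c d
        = Complex.I * ((if c = b ∧ d = a then (1:ℂ) else 0)
            + (if c = a ∧ d = b then 1 else 0)) := by
      simp [Matrix.smul_apply, Matrix.add_apply, hEentry, smul_eq_mul]
    rw [lhs1] at e1
    rw [lhs2] at e2
    have e2' : (if c = b ∧ d = a then (1:ℂ) else 0) + (if c = a ∧ d = b then 1 else 0)
        = ∑ i, (-(N : ℂ) * (ξ i a b + ξ i b a)) * ξ i c d := by
      apply mul_left_cancel₀ Complex.I_ne_zero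
      rw [e2, Finset.mul_sum]
      exact Finset.sum_congr rfl fun i _ => by ring
    have sum_split : (-(2:ℂ) * N) * ∑ i, ξ i a b * ξ i c d
        = (∑ i, (-(N : ℂ) * (ξ i a b - ξ i b a)) * ξ i c d)
          + ∑ i, (-(N : ℂ) * (ξ i a b + ξ i b a)) * ξ i c d := by
      rw [← Finset.sum_add_distrib, Finset.mul_sum]
      exact Finset.sum_congr rfl fun i _ => by ring
    rw [← e1, ← e2'] at sum_split
    rw [eq_div_iff hN0]
    linear_combination (-(1:ℂ)/2) * sum_split
  -- conclude
  ext c d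
  rw [Matrix.sum_apply]
  have expand : ∀ i : Fin (N^2), (ξ i * A * ξ i) c d = ∑ p, ∑ q, ξ i c p * A p q * ξ i q d := by
    intro i
    simp only [Matrix.mul_apply, Finset.sum_mul]
    exact Finset.sum_comm
  simp only [expand]
  rw [Finset.sum_comm]
  have swap : ∀ p, ∑ i, ∑ q, ξ i c p * A p q * ξ i q d
      = ∑ q, A p q * ∑ i, ξ i c p * ξ i q d := by
    intro p
    rw [Finset.sum_comm]
    exact Finset.sum_congr rfl fun q _ => by
      rw [Finset.mul_sum]; exact Finset.sum_congr rfl fun i _ => by ring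
  simp only [swap, key]
  have hq : ∀ p, ∑ q, A p q * (-(if q = p ∧ d = c then (1:ℂ) else 0) / N)
      = if d = c then -A p p / N else 0 := by
    intro p
    by_cases hdc : d = c
    · have h3 : ∀ q ∈ Finset.univ,
          A p q * (-(if q = p ∧ d = c then (1:ℂ) else 0) / N)
            = if q = p then -A p p / N else 0 := by
        intro q _; by_cases hqp : q = p <;> simp [hqp, hdc] <;> ring
      rw [Finset.sum_congr rfl h3, Finset.sum_ite_eq' Finset.univ p fun _ => -A p p / N]
      simp [hdc]
    · simp [hdc]
  rw [Finset.sum_congr rfl fun p _ => hq p]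
  by_cases hdc : d = c
  · subst hdc
    simp [Matrix.smul_apply, Matrix.one_apply, Matrix.trace, Matrix.diag, Finset.sum_div,
      neg_div, ← Finset.sum_neg_distrib]
  · simp [hdc, Matrix.smul_apply, Matrix.one_apply, Ne.symm hdc]
end

section
/- Let r, s > 0, let N ≥ 1, and let β_N = (ξ_1, …, ξ_{N²}) be an orthonormal basis of u_N. Then the family of 2N² matrices consisting of √r·ξ_i (1 ≤ i ≤ N²) together with √s·(i ξ_i) (1 ≤ i ≤ N²) is an orthonormal basis of gl_N = M_N(ℂ), viewed as a real vector space, with respect to the real inner product ⟨A,B⟩_{r,s} = ½(1/s + 1/r)·N·Re Tr(A B*) + ½(1/s − 1/r)·N·Re Tr(A B); that is, this family is orthonormal for ⟨·,·⟩_{r,s} and spans M_N(ℂ) over ℝ. -/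
/-!
Since `Yᴴ = -Y` for skew-Hermitian `Y`, both traces in `⟨c X, d Y⟩_{r,s}` are multiples of
`-N Tr(XY)`, with real coefficients read off from `c conj d` and `c d`. For `c, d ∈ {√r, i√s}`
these combine to `1` on the two diagonal blocks and to `0` across them, as `Re(i√(rs)) = 0`.
Spanning is the Cartesian decomposition `A = ℜA + i ℑA` with `iℑA` and `iℜA` skew-Hermitian.
-/

open Matrix

noncomputable def innerRS (r s : ℝ) (N : ℕ) (A B : Matrix (Fin N) (Fin N) ℂ) : ℝ :=
  (1 / 2) * (1 / s + 1 / r) * N * ((A * Bᴴ).trace).re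
    + (1 / 2) * (1 / s - 1 / r) * N * ((A * B).trace).re

theorem innerRS_smul_smul {r s : ℝ} {N : ℕ} {X Y : Matrix (Fin N) (Fin N) ℂ} {t : ℝ}
    (hY : Yᴴ = -Y) (ht : -(N : ℂ) * (X * Y).trace = t) (c d : ℂ) :
    innerRS r s N (c • X) (d • Y) =
      t / 2 * ((1 / s + 1 / r) * (c * star d).re - (1 / s - 1 / r) * (c * d).re) := by
  have hre : ∀ w : ℂ, N * (w * (X * Y).trace).re = -(t * w.re) := by
    intro w
    have : w * (X * Y).trace * N = -(t * w) := by linear_combination (-w) * ht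
    rw [mul_comm, ← Complex.re_mul_ofReal, Complex.ofReal_natCast, this]
    simp
  simp only [innerRS, conjTranspose_smul, hY, smul_mul_smul, mul_neg, smul_neg, trace_neg,
    trace_smul, smul_eq_mul, Complex.neg_re, mul_assoc _ (N : ℝ), hre]
  ring

open ComplexStarModule in
theorem Submodule.eq_top_of_skewAdjoint_mem {A : Type*} [AddCommGroup A] [Module ℂ A]
    [StarAddMonoid A] [StarModule ℂ A] (S : Submodule ℝ A)
    (h : ∀ a ∈ skewAdjoint A, a ∈ S) (hI : ∀ a ∈ skewAdjoint A, Complex.I • a ∈ S) :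
    S = ⊤ := by
  refine eq_top_iff'.mpr fun a => ?_
  have hre : (ℜ a : A) = -(Complex.I • Complex.I • (ℜ a : A)) := by
    rw [smul_smul, Complex.I_mul_I, neg_one_smul, neg_neg]
  rw [← realPart_add_I_smul_imaginaryPart a, hre]
  exact S.add_mem (S.neg_mem (hI _ (by simp))) (h _ (by simp))

theorem orthonormal_basis_glN_general (r s : ℝ) (hr : 0 < r) (hs : 0 < s) (N : ℕ)
    (ξ : Fin (N ^ 2) → Matrix (Fin N) (Fin N) ℂ)
    (hskew : ∀ i, (ξ i)ᴴ = -ξ i)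
    (horth : ∀ i j, -(N : ℂ) * (ξ i * ξ j).trace = if i = j then 1 else 0)
    (hspan : ∀ A : Matrix (Fin N) (Fin N) ℂ, Aᴴ = -A →
      A ∈ Submodule.span ℝ (Set.range ξ))
    (η : Fin (N ^ 2) ⊕ Fin (N ^ 2) → Matrix (Fin N) (Fin N) ℂ)
    (hη : η = Sum.elim (fun i => ((Real.sqrt r : ℂ)) • ξ i)
      (fun i => ((Real.sqrt s : ℂ)) • (Complex.I • ξ i))) :
    (∀ a b, innerRS r s N (η a) (η b) = if a = b then 1 else 0) ∧
      Submodule.span ℝ (Set.range η) = ⊤ := by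
  have horth' : ∀ i j, -(N : ℂ) * (ξ i * ξ j).trace = ((if i = j then 1 else 0 : ℝ) : ℂ) :=
    fun i j => by rw [horth]; split_ifs <;> simp
  refine ⟨?_, ?_⟩
  · subst hη
    rintro (i | i) (j | j) <;>
      simp only [Sum.elim_inl, Sum.elim_inr, smul_smul, innerRS_smul_smul (hskew j) (horth' i j)]
    all_goals
      simp [Complex.mul_re, Real.mul_self_sqrt hr.le, Real.mul_self_sqrt hs.le] <;>
        split_ifs <;> field_simp <;> ring
  · set S := Submodule.span ℝ (Set.range η)
    have hmem : ∀ {c : ℝ} {x}, 0 < c → (c : ℂ) • x ∈ Set.range η → x ∈ S := fun hc hx =>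
      (S.smul_mem_iff hc.ne').mp (by rw [← Complex.coe_smul]; exact Submodule.subset_span hx)
    have hξ : Set.range ξ ⊆ S := by
      rintro _ ⟨i, rfl⟩
      exact hmem (Real.sqrt_pos.mpr hr) ⟨.inl i, by rw [hη]; rfl⟩
    have hIξ : Set.range ξ ⊆ S.comap (DistribSMul.toLinearMap ℝ _ Complex.I) := by
      rintro _ ⟨i, rfl⟩
      exact hmem (Real.sqrt_pos.mpr hs) ⟨.inr i, by rw [hη]; rfl⟩
    refine S.eq_top_of_skewAdjoint_mem (fun a ha => ?_) (fun a ha => ?_)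
    · exact Submodule.span_le.mpr hξ (hspan a ha)
    · exact Submodule.span_le.mpr hIξ (hspan a ha)

/-- If `ξ` is an orthonormal basis of `u_N` (skew-Hermitian matrices with inner product
`-N Tr(ξη)`), then the family `{√r ξ_i} ∪ {√s (i ξ_i)}` is an orthonormal basis of
`gl_N = M_N(ℂ)` as a real vector space, for the inner product `⟨·,·⟩_{r,s}`. -/
theorem orthonormal_basis_glN (r s : ℝ) (hr : 0 < r) (hs : 0 < s) (N : ℕ) (hN : 1 ≤ N)
    (ξ : Fin (N ^ 2) → Matrix (Fin N) (Fin N) ℂ)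
    (hskew : ∀ i, (ξ i)ᴴ = -ξ i)
    (horth : ∀ i j, -(N : ℂ) * (ξ i * ξ j).trace = if i = j then 1 else 0)
    (hspan : ∀ A : Matrix (Fin N) (Fin N) ℂ, Aᴴ = -A →
      A ∈ Submodule.span ℝ (Set.range ξ))
    (η : Fin (N ^ 2) ⊕ Fin (N ^ 2) → Matrix (Fin N) (Fin N) ℂ)
    (hη : η = Sum.elim (fun i => ((Real.sqrt r : ℂ)) • ξ i)
      (fun i => ((Real.sqrt s : ℂ)) • (Complex.I • ξ i))) :
    (∀ a b, innerRS r s N (η a) (η b) = if a = b then 1 else 0) ∧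
      Submodule.span ℝ (Set.range η) = ⊤ :=
  orthonormal_basis_glN_general r s hr hs N ξ hskew horth hspan η hη
end

section
/- Let (f_n)_{n≥1} be a family of differentiable functions f_n : ℝ → ℝ satisfying: f_n(0) = 1 for all n ≥ 1; f_1(t) = 1 for all t ∈ ℝ; and f_n′(t) = −Σ_{k=1}^{n−1} k · f_k(t) · f_{n−k}(t) for every n ≥ 2 and every t ∈ ℝ. Then for every n ≥ 1 and every t ∈ ℝ, f_n(t) = Σ_{k=0}^{n−1} ((−t)^k / k!) · n^{k−1} · C(n, k+1), where C(n, k+1) is the binomial coefficient. -/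
/-!
With `F = ∑ ϱₙ(t) zⁿ`, the ODE system says `∂ₜF + F · z∂_zF = 0`, and `F(z, 0) = z/(1 - z)`.
This PDE is verified one coefficient at a time, by strong induction on `n`. Once the residual
vanishes below degree `n`, the `n`-th coefficients `aₘ(t)` of `Fᵐ` obey
`aₘ' = -(m n/(m + 1)) aₘ₊₁` for `m ≥ 2` (the residual term dies because `F` has no constant
term) and `aₘ(0) = C(n - 1, m - 1)`. Together these give every Taylor coefficient at `0` of the
`n`-th residual coefficient `ϱₙ' + (n/2) a₂`, and all of them vanish. Uniqueness for the ODE then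
follows by strong induction on `n`: `fₙ - ϱₙ` has zero derivative and vanishes at `0`.
-/

open scoped Nat PowerSeries

open Polynomial Finset

noncomputable section

namespace PowerSeries

variable {R : Type*} [CommSemiring R]

theorem coeff_mul_eq_zero_of_constantCoeff_eq_zero {G H : R⟦X⟧} {n : ℕ}
    (hG : constantCoeff G = 0) (hH : ∀ k < n, coeff k H = 0) : coeff n (G * H) = 0 := by
  rw [coeff_mul]
  refine sum_eq_zero fun ⟨i, j⟩ hij => ?_
  rw [HasAntidiagonal.mem_antidiagonal] at hij
  rcases Nat.eq_zero_or_pos i with rfl | hi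
  · rw [coeff_zero_eq_constantCoeff_apply, hG, zero_mul]
  · rw [hH j (by omega), mul_zero]

theorem coeff_X_mul_derivative (G : R⟦X⟧) (n : ℕ) :
    coeff n (X * d⁄dX R G) = n * coeff n G := by
  cases n with
  | zero => simp
  | succ n => rw [coeff_succ_X_mul, coeff_derivative, mul_comm]; push_cast; rfl

theorem coeff_pow_mul_X_mul_derivative (G : R⟦X⟧) (m n : ℕ) :
    (m + 1) • coeff n (G ^ m * (X * d⁄dX R G)) = n • coeff n (G ^ (m + 1)) := by
  rw [nsmul_eq_mul, nsmul_eq_mul, ← coeff_X_mul_derivative, derivative_pow, add_tsub_cancel_right,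
    ← coeff_C_mul]
  congr 1
  simp only [map_natCast]
  ring

def mapDerivative (G : R[X]⟦X⟧) : R[X]⟦X⟧ :=
  mk fun n => Polynomial.derivative (coeff n G)

theorem coeff_mapDerivative (G : R[X]⟦X⟧) (n : ℕ) :
    coeff n (mapDerivative G) = Polynomial.derivative (coeff n G) :=
  coeff_mk _ _

theorem mapDerivative_mul (G H : R[X]⟦X⟧) :
    mapDerivative (G * H) = mapDerivative G * H + G * mapDerivative H := by
  ext n : 1
  simp only [map_add, coeff_mapDerivative, coeff_mul, map_sum, derivative_mul, sum_add_distrib]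

theorem mapDerivative_pow (G : R[X]⟦X⟧) (m : ℕ) :
    mapDerivative (G ^ (m + 1)) = (m + 1) • (G ^ m * mapDerivative G) := by
  induction m with
  | zero => simp
  | succ m ih =>
    rw [pow_succ, mapDerivative_mul, ih, succ_nsmul _ (m + 1)]
    ring

end PowerSeries

theorem Polynomial.eq_zero_of_forall_eval_zero_iterate_derivative {R : Type*} [Semiring R]
    [IsAddTorsionFree R] {p : R[X]} (h : ∀ k, (derivative^[k] p).eval 0 = 0) : p = 0 := by
  ext k
  have hk := h k
  rw [← coeff_zero_eq_eval_zero, coeff_iterate_derivative, zero_add, Nat.descFactorial_self,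
    nsmul_eq_zero_iff_right (Nat.factorial_ne_zero k)] at hk
  rw [hk, coeff_zero]

def varrhoPoly (n : ℕ) : ℝ[X] :=
  ∑ k ∈ range n, C ((-1) ^ k / k ! * (n : ℝ) ^ ((k : ℤ) - 1) * n.choose (k + 1)) * X ^ k

theorem eval_varrhoPoly (n : ℕ) (t : ℝ) :
    (varrhoPoly n).eval t = ∑ k ∈ range n,
      ((-t) ^ k / (k ! : ℝ)) * (n : ℝ) ^ ((k : ℤ) - 1) * (n.choose (k + 1) : ℝ) := by
  simp only [varrhoPoly, eval_finsetSum, eval_mul, eval_C, eval_pow, eval_X, neg_pow t]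
  refine sum_congr rfl fun k _ => by ring

theorem coeff_varrhoPoly (n k : ℕ) :
    (varrhoPoly n).coeff k = (-1) ^ k / k ! * (n : ℝ) ^ ((k : ℤ) - 1) * n.choose (k + 1) := by
  simp only [varrhoPoly, finsetSum_coeff, coeff_C_mul_X_pow]
  rw [sum_ite_eq, ite_eq_left_iff, mem_range, not_lt]
  intro hnk
  rw [Nat.choose_eq_zero_of_lt (by omega), Nat.cast_zero, mul_zero]

@[simp]
theorem varrhoPoly_zero : varrhoPoly 0 = 0 := by
  simp [varrhoPoly]

@[simp]
theorem varrhoPoly_one : varrhoPoly 1 = 1 := by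
  simp [varrhoPoly]

theorem eval_zero_iterate_derivative_varrhoPoly (n k : ℕ) :
    (derivative^[k] (varrhoPoly n)).eval 0 =
      (-1) ^ k * (n : ℝ) ^ ((k : ℤ) - 1) * n.choose (k + 1) := by
  rw [← coeff_zero_eq_eval_zero, coeff_iterate_derivative, zero_add, Nat.descFactorial_self,
    coeff_varrhoPoly, nsmul_eq_mul]
  field_simp

theorem eval_zero_varrhoPoly {n : ℕ} (hn : 1 ≤ n) : (varrhoPoly n).eval 0 = 1 := by
  have h := eval_zero_iterate_derivative_varrhoPoly n 0
  rw [Function.iterate_zero_apply, Nat.choose_one_right] at h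
  rw [h, pow_zero, one_mul, Nat.cast_zero, zero_sub, zpow_neg_one,
    inv_mul_cancel₀ (Nat.cast_ne_zero.2 (by omega))]

def varrhoSeries : ℝ[X]⟦X⟧ :=
  PowerSeries.mk varrhoPoly

theorem coeff_varrhoSeries (n : ℕ) : PowerSeries.coeff n varrhoSeries = varrhoPoly n :=
  PowerSeries.coeff_mk _ _

theorem constantCoeff_varrhoSeries : PowerSeries.constantCoeff varrhoSeries = 0 := by
  rw [← PowerSeries.coeff_zero_eq_constantCoeff_apply, coeff_varrhoSeries, varrhoPoly_zero]

theorem map_evalRingHom_zero_varrhoSeries :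
    PowerSeries.map (evalRingHom 0) varrhoSeries = PowerSeries.X * PowerSeries.mk 1 := by
  ext (_ | n)
  · simp [coeff_varrhoSeries]
  · rw [PowerSeries.coeff_map, coeff_varrhoSeries, PowerSeries.coeff_succ_X_mul, coe_evalRingHom,
      ← coeff_zero_eq_eval_zero, coeff_varrhoPoly]
    simp [inv_mul_cancel₀ (Nat.cast_add_one_ne_zero (R := ℝ) n)]

theorem eval_zero_coeff_varrhoSeries_pow (p : ℕ) {n : ℕ} (hn : 1 ≤ n) :
    (PowerSeries.coeff n (varrhoSeries ^ (p + 1))).eval 0 = (n - 1).choose p := by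
  rw [← coe_evalRingHom, ← PowerSeries.coeff_map, map_pow, map_evalRingHom_zero_varrhoSeries,
    mul_pow, PowerSeries.mk_one_pow_eq_mk_choose_add, PowerSeries.coeff_X_pow_mul']
  split_ifs with h
  · rw [PowerSeries.coeff_mk, Nat.cast_inj]
    congr 1
    omega
  · rw [Nat.choose_eq_zero_of_lt (by omega), Nat.cast_zero]

/-- `∂ₜF + F · z ∂_z F` for `F = ∑ ϱₙ zⁿ`: the generating-function form of the ODE system. -/
def varrhoResidual : ℝ[X]⟦X⟧ :=
  PowerSeries.mapDerivative varrhoSeries +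
    varrhoSeries * (PowerSeries.X * d⁄dX ℝ[X] varrhoSeries)

theorem coeff_varrhoResidual (n : ℕ) :
    PowerSeries.coeff n varrhoResidual = derivative (varrhoPoly n) +
      PowerSeries.coeff n (varrhoSeries * (PowerSeries.X * d⁄dX ℝ[X] varrhoSeries)) := by
  rw [varrhoResidual, map_add, PowerSeries.coeff_mapDerivative, coeff_varrhoSeries]

theorem coeff_varrhoSeries_mul_X_mul_derivative (n : ℕ) :
    PowerSeries.coeff n (varrhoSeries * (PowerSeries.X * d⁄dX ℝ[X] varrhoSeries)) =
      ∑ k ∈ Icc 1 (n - 1), (k : ℝ) • (varrhoPoly k * varrhoPoly (n - k)) := by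
  rw [mul_comm, PowerSeries.coeff_mul, Nat.sum_antidiagonal_eq_sum_range_succ_mk]
  simp only [PowerSeries.coeff_X_mul_derivative, coeff_varrhoSeries, ← nsmul_eq_mul,
    ← Nat.cast_smul_eq_nsmul ℝ, smul_mul_assoc]
  refine (Finset.sum_subset (fun k hk => ?_) fun k hk hk' => ?_).symm
  · simp only [mem_Icc, mem_range] at hk ⊢
    omega
  · simp only [mem_Icc, mem_range] at hk hk'
    obtain rfl | rfl : k = 0 ∨ k = n := by omega
    all_goals simp

section InductionStep

variable {n : ℕ}

theorem derivative_coeff_varrhoSeries_pow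
    (hlow : ∀ k < n, PowerSeries.coeff k varrhoResidual = 0) (m : ℕ) :
    derivative (PowerSeries.coeff n (varrhoSeries ^ (m + 2))) =
      (-(m + 2) * n / (m + 3) : ℝ) • PowerSeries.coeff n (varrhoSeries ^ (m + 3)) := by
  set F := varrhoSeries
  set zF' := PowerSeries.X * d⁄dX ℝ[X] F
  have hres : PowerSeries.coeff n (F ^ (m + 1) * varrhoResidual) = 0 :=
    PowerSeries.coeff_mul_eq_zero_of_constantCoeff_eq_zero
      (by simp [F, constantCoeff_varrhoSeries]) hlow
  have hEuler : ((m : ℝ) + 3) • PowerSeries.coeff n (F ^ (m + 2) * zF') =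
      (n : ℝ) • PowerSeries.coeff n (F ^ (m + 3)) := by
    have := PowerSeries.coeff_pow_mul_X_mul_derivative F (m + 2) n
    rw [← Nat.cast_smul_eq_nsmul ℝ, ← Nat.cast_smul_eq_nsmul ℝ] at this
    convert this using 2
    push_cast
    ring
  have hsplit : PowerSeries.mapDerivative F = varrhoResidual - F * zF' := by
    rw [varrhoResidual]
    ring
  rw [← PowerSeries.coeff_mapDerivative, PowerSeries.mapDerivative_pow, hsplit, mul_sub,
    ← mul_assoc, ← pow_succ, map_nsmul, map_sub, hres, zero_sub, ← Nat.cast_smul_eq_nsmul ℝ,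
    ← inv_smul_smul₀ (by positivity : (m : ℝ) + 3 ≠ 0) (PowerSeries.coeff n (F ^ (m + 2) * zF')),
    hEuler, smul_neg, smul_smul, smul_smul, ← neg_smul]
  congr 1
  push_cast
  field_simp
  ring

theorem iterate_derivative_coeff_varrhoSeries_sq
    (hlow : ∀ k < n, PowerSeries.coeff k varrhoResidual = 0) (j : ℕ) :
    derivative^[j] (PowerSeries.coeff n (varrhoSeries ^ 2)) =
      ((-n) ^ j * 2 / (j + 2) : ℝ) • PowerSeries.coeff n (varrhoSeries ^ (j + 2)) := by
  induction j with
  | zero => simp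
  | succ j ih =>
    rw [Function.iterate_succ_apply', ih, derivative_smul,
      derivative_coeff_varrhoSeries_pow hlow, smul_smul]
    congr 1
    push_cast
    field_simp
    ring

theorem coeff_varrhoSeries_mul_X_mul_derivative_eq_half_smul :
    PowerSeries.coeff n (varrhoSeries * (PowerSeries.X * d⁄dX ℝ[X] varrhoSeries)) =
      (n / 2 : ℝ) • PowerSeries.coeff n (varrhoSeries ^ 2) := by
  have h := PowerSeries.coeff_pow_mul_X_mul_derivative varrhoSeries 1 n
  rw [pow_one, ← Nat.cast_smul_eq_nsmul ℝ, ← Nat.cast_smul_eq_nsmul ℝ] at h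
  rw [div_eq_inv_mul, mul_smul, ← h, smul_smul]
  norm_num

theorem coeff_varrhoResidual_eq_zero_of_lower (hn : 1 ≤ n)
    (hlow : ∀ k < n, PowerSeries.coeff k varrhoResidual = 0) :
    PowerSeries.coeff n varrhoResidual = 0 := by
  rw [coeff_varrhoResidual, coeff_varrhoSeries_mul_X_mul_derivative_eq_half_smul]
  refine Polynomial.eq_zero_of_forall_eval_zero_iterate_derivative fun j => ?_
  rw [iterate_map_add, iterate_derivative_smul, ← Function.iterate_succ_apply, eval_add,
    eval_smul, iterate_derivative_coeff_varrhoSeries_sq hlow, eval_smul,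
    eval_zero_iterate_derivative_varrhoPoly, eval_zero_coeff_varrhoSeries_pow (j + 1) hn]
  obtain ⟨n, rfl⟩ : ∃ m, n = m + 1 := ⟨n - 1, by omega⟩
  have hchoose : ((n + 1).choose (j + 1 + 1) : ℝ) * (j + 2) = (n + 1) * n.choose (j + 1) := by
    exact_mod_cast (Nat.add_one_mul_choose_eq n (j + 1)).symm
  simp only [Nat.succ_eq_add_one, Nat.cast_add_one, add_sub_cancel_right, zpow_natCast,
    add_tsub_cancel_right, smul_eq_mul]
  rw [neg_pow ((n : ℝ) + 1)]
  field_simp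
  linear_combination -(-1) ^ j * ((n : ℝ) + 1) ^ j * hchoose

end InductionStep

theorem coeff_varrhoResidual_eq_zero (n : ℕ) : PowerSeries.coeff n varrhoResidual = 0 := by
  induction n using Nat.strong_induction_on with
  | _ n ih =>
    rcases Nat.eq_zero_or_pos n with rfl | hn
    · rw [coeff_varrhoResidual, varrhoPoly_zero, derivative_zero, zero_add]
      exact PowerSeries.coeff_mul_eq_zero_of_constantCoeff_eq_zero constantCoeff_varrhoSeries
        (by simp)
    · exact coeff_varrhoResidual_eq_zero_of_lower hn ih

theorem derivative_varrhoPoly (n : ℕ) :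
    derivative (varrhoPoly n) =
      -∑ k ∈ Icc 1 (n - 1), (k : ℝ) • (varrhoPoly k * varrhoPoly (n - k)) := by
  rw [eq_neg_iff_add_eq_zero, ← coeff_varrhoSeries_mul_X_mul_derivative, ← coeff_varrhoResidual]
  exact coeff_varrhoResidual_eq_zero n

end

/-- Uniqueness for the coupled ODE system of Lemma 4.1: any family of differentiable
functions `f_n` with `f_n(0) = 1`, `f_1 ≡ 1`, and `f_n′(t) = −Σ_{k=1}^{n−1} k f_k(t) f_{n−k}(t)`
for `n ≥ 2`, must equal `ϱ_n(t) = Σ_{k=0}^{n−1} ((−t)^k/k!) n^{k−1} C(n,k+1)`. -/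
theorem varrho_ode_unique (f : ℕ → ℝ → ℝ)
    (hdiff : ∀ n : ℕ, 1 ≤ n → Differentiable ℝ (f n))
    (h0 : ∀ n : ℕ, 1 ≤ n → f n 0 = 1)
    (h1 : ∀ t : ℝ, f 1 t = 1)
    (hode : ∀ n : ℕ, 2 ≤ n → ∀ t : ℝ,
      deriv (f n) t = -(∑ k ∈ Finset.Icc 1 (n - 1), (k : ℝ) * f k t * f (n - k) t)) :
    ∀ n : ℕ, 1 ≤ n → ∀ t : ℝ,
      f n t = ∑ k ∈ Finset.range n,
        ((-t) ^ k / (k ! : ℝ)) * (n : ℝ) ^ ((k : ℤ) - 1) * (n.choose (k + 1) : ℝ) := by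
  intro n hn t
  rw [← eval_varrhoPoly]
  induction n using Nat.strong_induction_on generalizing t with
  | _ n ih =>
  obtain rfl | hn2 : n = 1 ∨ 2 ≤ n := by omega
  · rw [h1, varrhoPoly_one, eval_one]
  have hderiv : ∀ s, deriv (fun s => f n s - (varrhoPoly n).eval s) s = 0 := by
    intro s
    rw [deriv_fun_sub (hdiff n hn s) (varrhoPoly n).differentiableAt, hode n hn2 s,
      Polynomial.deriv, derivative_varrhoPoly, eval_neg, eval_finsetSum, sub_eq_zero, neg_inj]
    refine sum_congr rfl fun k hk => ?_
    rw [mem_Icc] at hk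
    rw [eval_smul, eval_mul, ih k (by omega) (by omega), ih (n - k) (by omega) (by omega),
      smul_eq_mul, mul_assoc]
  have hconst := is_const_of_deriv_eq_zero ((hdiff n hn).sub (varrhoPoly n).differentiable)
    hderiv t 0
  rwa [Pi.sub_apply, Pi.sub_apply, h0 n hn, eval_zero_varrhoPoly hn, sub_self,
    sub_eq_zero] at hconst
end
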